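/- arXiv:2312.07790 — 2 statements merged into one kernel-verified Lean document; each statement's English description precedes it below -/
import Mathlib

section
/- The squared characteristic function distance is a metric discriminator: Let P and Q be probability measures on ℝ^d with characteristic functions φ_P and φ_Q, and let ω : ℝ^d → ℝ be a measurable weighting function with ω(t) > 0 for Lebesgue-almost every t. Then CFD_ω²(P, Q) := ∫_{ℝ^d} |φ_P(t) − φ_Q(t)|² ω(t) dt satisfies CFD_ω²(P, Q) = 0 if and only if P = Q. -/
open MeasureTheory Finset

/-- The characteristic function of a measure `μ` on `ℝ^d`. -/
noncomputable def charFunPi {d : ℕ} (μ : Measure (Fin d → ℝ)) (t : Fin d → ℝ) : ℂ :=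
  ∫ x, Complex.exp (((∑ j, t j * x j : ℝ) : ℂ) * Complex.I) ∂μ

section Aux

open Real Complex SchwartzMap Metric Set
open scoped RealInnerProductSpace FourierTransform Topology ENNReal ContDiff

variable {d : ℕ}

/-- characteristic function on Euclidean space -/
noncomputable def charE {d : ℕ} (μ : Measure (EuclideanSpace ℝ (Fin d)))
    (t : EuclideanSpace ℝ (Fin d)) : ℂ :=
  ∫ x, Complex.exp ((⟪t, x⟫ : ℂ) * Complex.I) ∂μ

/-- smooth compactly supported functions are Schwartz -/
noncomputable def toSchwartzOfCompactSupport {V F : Type*} [NormedAddCommGroup V]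
    [NormedSpace ℝ V] [NormedAddCommGroup F] [NormedSpace ℝ F] (g : V → F)
    (hg : ContDiff ℝ ∞ g) (hgc : HasCompactSupport g) : SchwartzMap V F where
  toFun := g
  smooth' := hg
  decay' := by
    intro k n
    obtain ⟨C, hC⟩ := Continuous.bounded_above_of_compact_support
      (f := fun x => ‖x‖ ^ k * ‖iteratedFDeriv ℝ n g x‖)
      ((continuous_norm.pow k).mul
        (hg.continuous_iteratedFDeriv (mod_cast le_top)).norm)
      ((hgc.iteratedFDeriv n).norm.mul_left)
    exact ⟨C, fun x => (Real.le_norm_self _).trans (hC x)⟩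

lemma toSchwartz_apply {V F : Type*} [NormedAddCommGroup V]
    [NormedSpace ℝ V] [NormedAddCommGroup F] [NormedSpace ℝ F] (g : V → F)
    (hg : ContDiff ℝ ∞ g) (hgc : HasCompactSupport g) (x : V) :
    toSchwartzOfCompactSupport g hg hgc x = g x := rfl

/-- Schwartz test functions from equal characteristic functions -/
lemma integral_schwartz_eq_of_charE (P Q : Measure (EuclideanSpace ℝ (Fin d)))
    [IsProbabilityMeasure P] [IsProbabilityMeasure Q]
    (h : ∀ t, charE P t = charE Q t) (f : SchwartzMap (EuclideanSpace ℝ (Fin d)) ℂ) :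
    ∫ x, f x ∂P = ∫ x, f x ∂Q := by
  set E := EuclideanSpace ℝ (Fin d)
  -- the "conjugate" characteristic functions agree
  have hψ : ∀ (μ : Measure E) (x : E),
      VectorFourier.fourierIntegral 𝐞 μ (innerₗ E).flip (fun _ => (1 : ℂ)) x
        = charE μ ((-(2 * π)) • x) := by
    intro μ x
    unfold VectorFourier.fourierIntegral charE
    refine integral_congr_ae (Filter.Eventually.of_forall fun ξ => ?_)
    beta_reduce
    rw [Circle.smul_def, smul_eq_mul, mul_one, Real.fourierChar_apply]
    congr 2
    push_cast
    have h' : (innerₗ E).flip ξ x = ⟪x, ξ⟫ := rfl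
    rw [h', real_inner_smul_left]
    push_cast
    ring
  set g := (FourierTransform.fourierCLE ℂ (SchwartzMap E ℂ)).symm f with hgdef
  have hf : ⇑f = 𝓕 ⇑g := by
    conv_lhs => rw [← (FourierTransform.fourierCLE ℂ (SchwartzMap E ℂ)).apply_symm_apply f]
    rfl
  have key : ∀ (μ : Measure E) [IsProbabilityMeasure μ],
      ∫ x, f x ∂μ = ∫ x, g x • (charE μ ((-(2 * π)) • x)) := by
    intro μ _
    have h1 : ∫ x, f x ∂μ
        = ∫ ξ, (VectorFourier.fourierIntegral 𝐞 volume (innerₗ E) (⇑g) ξ) • (1 : ℂ) ∂μ := by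
      simp only [smul_eq_mul, mul_one]
      rw [hf]
      rfl
    rw [h1, VectorFourier.integral_fourierIntegral_smul_eq_flip Real.continuous_fourierChar
      continuous_inner g.integrable (integrable_const (1 : ℂ))]
    exact integral_congr_ae (Filter.Eventually.of_forall fun x => by simp only [hψ])
  rw [key P, key Q]
  exact integral_congr_ae (Filter.Eventually.of_forall fun x => by simp only [h])

/-- equal integrals of Schwartz functions give equality on compacts -/
lemma measure_compact_eq (P Q : Measure (EuclideanSpace ℝ (Fin d)))
    [IsProbabilityMeasure P] [IsProbabilityMeasure Q]
    (h : ∀ f : SchwartzMap (EuclideanSpace ℝ (Fin d)) ℂ, ∫ x, f x ∂P = ∫ x, f x ∂Q)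
    {K : Set (EuclideanSpace ℝ (Fin d))} (hK : IsCompact K) : P K = Q K := by
  rcases K.eq_empty_or_nonempty with rfl | hKne
  · simp
  have hreal : ∀ (gr : EuclideanSpace ℝ (Fin d) → ℝ), ContDiff ℝ ∞ gr → HasCompactSupport gr →
      ∫ x, gr x ∂P = ∫ x, gr x ∂Q := by
    intro gr hsm hsupp
    have hc : ContDiff ℝ ∞ (fun x => (gr x : ℂ)) := Complex.ofRealCLM.contDiff.comp hsm
    have hcs : HasCompactSupport (fun x => (gr x : ℂ)) :=
      hsupp.comp_left (g := (Complex.ofReal)) Complex.ofReal_zero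
    have h2 := h (toSchwartzOfCompactSupport _ hc hcs)
    simp only [toSchwartz_apply] at h2
    have e1 : (∫ x, (gr x : ℂ) ∂P) = ((∫ x, gr x ∂P : ℝ) : ℂ) := integral_ofReal
    have e2 : (∫ x, (gr x : ℂ) ∂Q) = ((∫ x, gr x ∂Q : ℝ) : ℂ) := integral_ofReal
    rw [e1, e2] at h2
    exact_mod_cast h2
  have hfn : ∀ n : ℕ, ∃ gr : EuclideanSpace ℝ (Fin d) → ℝ, ContDiff ℝ ∞ gr ∧ HasCompactSupport gr ∧
      Set.EqOn gr 1 K ∧ (∀ x, gr x ∈ Set.Icc (0:ℝ) 1) ∧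
      ∀ x ∉ Metric.thickening (1/(n+1)) K, gr x = 0 := by
    intro n
    have hδ : (0:ℝ) < 1/(n+1) := by positivity
    obtain ⟨f, hf0, hf1, hficc⟩ := exists_contMDiffMap_zero_one_of_isClosed (n := (⊤ : ℕ∞)) (modelWithCornersSelf ℝ (EuclideanSpace ℝ (Fin d)))
      (isOpen_thickening.isClosed_compl) hK.isClosed
      (disjoint_left.mpr fun x hx hxK => hx  (self_subset_thickening hδ K hxK))
    refine ⟨f, ?_, ?_, hf1, hficc, fun x hx => hf0 hx⟩
    · exact contMDiff_iff_contDiff.mp f.contMDiff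
    · refine HasCompactSupport.of_support_subset_isCompact (hK.cthickening (r := 1/(n+1))) ?_
      intro x hx
      by_contra hmem
      exact hx (hf0 (fun hth => hmem
        ((Metric.thickening_subset_cthickening _ _) hth)))
  choose g hsm hsupp h1 hicc h0 using hfn
  have hlim : ∀ (μ : Measure (EuclideanSpace ℝ (Fin d))) [IsProbabilityMeasure μ],
      Filter.Tendsto (fun n => ∫ x, g n x ∂μ) Filter.atTop (𝓝 ((μ K).toReal)) := by
    intro μ _
    have : ∫ x, Set.indicator K (fun _ => (1:ℝ)) x ∂μ = (μ K).toReal := by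
      rw [integral_indicator_const (1 : ℝ) hK.isClosed.measurableSet]
      simp
      rfl
    rw [← this]
    apply tendsto_integral_of_dominated_convergence (bound := fun _ => 1)
    · exact fun n => ((hsm n).continuous).aestronglyMeasurable
    · exact integrable_const 1
    · intro n
      filter_upwards with x
      rw [Real.norm_eq_abs, abs_le]
      rcases hicc n x with ⟨ha, hb⟩
      constructor <;> linarith
    · filter_upwards with x
      by_cases hx : x ∈ K
      · have : ∀ n, g n x = 1 := fun n => h1 n hx
        simp only [this, Set.indicator_of_mem hx]
        exact tendsto_const_nhds
      · rw [Set.indicator_of_notMem hx]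
        have hd : 0 < Metric.infDist x K :=
          (hK.isClosed.notMem_iff_infDist_pos hKne).mp hx
        obtain ⟨N, hN⟩ := exists_nat_one_div_lt hd
        apply tendsto_const_nhds.congr'
        filter_upwards [Filter.eventually_ge_atTop N] with n hn
        refine (h0 n x fun hth => ?_).symm
        have hlt := (Metric.mem_thickening_iff_infDist_lt hKne).mp hth
        have : (1:ℝ)/(n+1) ≤ 1/(N+1) := by
          apply one_div_le_one_div_of_le <;> [positivity; exact_mod_cast by omega]
        linarith
  have := tendsto_nhds_unique ((hlim P).congr (fun n => hreal (g n) (hsm n) (hsupp n)))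
    (hlim Q)
  exact (ENNReal.toReal_eq_toReal_iff' (measure_ne_top P K) (measure_ne_top Q K)).mp this

/-- the key uniqueness result -/
lemma measure_ext_of_charE (P Q : Measure (EuclideanSpace ℝ (Fin d)))
    [IsProbabilityMeasure P] [IsProbabilityMeasure Q]
    (h : ∀ t, charE P t = charE Q t) : P = Q := by
  have hS := integral_schwartz_eq_of_charE P Q h
  have hclosed : ∀ F : Set (EuclideanSpace ℝ (Fin d)), IsClosed F → P F = Q F := by
    intro F hF
    have hmono : Monotone (fun n : ℕ => F ∩ Metric.closedBall 0 n) := by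
      intro a b hab
      exact Set.inter_subset_inter_right F (Metric.closedBall_subset_closedBall (by exact_mod_cast hab))
    have hunion : ⋃ n : ℕ, F ∩ Metric.closedBall 0 n = F := by
      rw [← Set.inter_iUnion]
      refine Set.inter_eq_self_of_subset_left fun x _ => Set.mem_iUnion.mpr ⟨⌈‖x‖⌉₊, ?_⟩
      rw [Metric.mem_closedBall, dist_zero_right]
      exact Nat.le_ceil _
    have hPl := tendsto_measure_iUnion_atTop (μ := P) hmono
    have hQl := tendsto_measure_iUnion_atTop (μ := Q) hmono
    rw [hunion] at hPl hQl
    have heq : ∀ n : ℕ, P (F ∩ Metric.closedBall 0 n) = Q (F ∩ Metric.closedBall 0 n) :=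
      fun n => measure_compact_eq P Q hS ((isCompact_closedBall (0:EuclideanSpace ℝ (Fin d)) n).inter_left hF)
    exact tendsto_nhds_unique (hPl.congr fun n => heq n) hQl
  apply ext_of_generate_finite _ ?_ isPiSystem_isClosed (fun F hF => hclosed F hF)
  · exact hclosed _ isClosed_univ
  · rw [BorelSpace.measurable_eq (α := EuclideanSpace ℝ (Fin d)), borel_eq_generateFrom_isClosed]

lemma charFunPi_continuous (P : Measure (Fin d → ℝ)) [IsProbabilityMeasure P] :
    Continuous (charFunPi P) := by
  apply continuous_of_dominated (bound := fun _ => 1)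
  · intro t
    apply Continuous.aestronglyMeasurable
    exact Complex.continuous_exp.comp ((Complex.continuous_ofReal.comp
      (by continuity)).mul continuous_const)
  · intro t
    filter_upwards with x
    rw [Complex.norm_exp_ofReal_mul_I]
  · exact integrable_const 1
  · filter_upwards with x
    exact Complex.continuous_exp.comp ((Complex.continuous_ofReal.comp
      (continuous_finset_sum _ fun j _ => (continuous_apply j).mul continuous_const)).mul
      continuous_const)

end Aux

/-- The squared characteristic function distance is a metric discriminator: for a
measurable weighting function `ω` that is positive Lebesgue-almost everywhere,
`CFD_ω²(P, Q) = ∫ |φ_P(t) - φ_Q(t)|² ω(t) dt` vanishes iff `P = Q`. -/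
theorem cfd_eq_zero_iff {d : ℕ} (P Q : Measure (Fin d → ℝ))
    [IsProbabilityMeasure P] [IsProbabilityMeasure Q]
    (ω : (Fin d → ℝ) → ℝ) (hω : Measurable ω)
    (hpos : ∀ᵐ t ∂(volume : Measure (Fin d → ℝ)), 0 < ω t) :
    (∫⁻ t : Fin d → ℝ,
        ENNReal.ofReal (‖charFunPi P t - charFunPi Q t‖ ^ 2 * ω t) = 0) ↔ P = Q := by
  constructor
  · intro h0
    have hcP := charFunPi_continuous P
    have hcQ := charFunPi_continuous Q
    have hmeas : Measurable (fun t => ENNReal.ofReal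
        (‖charFunPi P t - charFunPi Q t‖ ^ 2 * ω t)) :=
      ENNReal.measurable_ofReal.comp
        ((((hcP.sub hcQ).norm.measurable).pow_const 2).mul hω)
    have hae := (lintegral_eq_zero_iff' hmeas.aemeasurable).mp h0
    have hφ : charFunPi P =ᵐ[(volume : Measure (Fin d → ℝ))] charFunPi Q := by
      filter_upwards [hae, hpos] with t h1 h2
      have hle : ‖charFunPi P t - charFunPi Q t‖ ^ 2 * ω t ≤ 0 := by
        simpa only [Pi.zero_apply, ENNReal.ofReal_eq_zero] using h1
      have hn2 : ‖charFunPi P t - charFunPi Q t‖ ^ 2 ≤ 0 := by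
        by_contra hc
        push_neg at hc
        nlinarith
      have hn : ‖charFunPi P t - charFunPi Q t‖ = 0 := by
        have := le_antisymm hn2 (sq_nonneg _)
        nlinarith [norm_nonneg (charFunPi P t - charFunPi Q t)]
      rw [← sub_eq_zero]
      exact norm_eq_zero.mp hn
    have hφeq : charFunPi P = charFunPi Q :=
      (Continuous.ae_eq_iff_eq volume hcP hcQ).mp hφ
    set e := (MeasurableEquiv.toLp 2 (Fin d → ℝ)).symm with he
    haveI : IsProbabilityMeasure (P.map e.symm) :=
      Measure.isProbabilityMeasure_map e.symm.measurable.aemeasurable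
    haveI : IsProbabilityMeasure (Q.map e.symm) :=
      Measure.isProbabilityMeasure_map e.symm.measurable.aemeasurable
    have hchar : ∀ (μ : Measure (Fin d → ℝ)) [IsProbabilityMeasure μ],
        ∀ t, charE (μ.map e.symm) t = charFunPi μ (e t) := by
      intro μ _ t
      rw [charE, MeasureTheory.integral_map_equiv]
      unfold charFunPi
      refine integral_congr_ae (Filter.Eventually.of_forall fun y => ?_)
      beta_reduce
      have : (inner ℝ t (e.symm y) : ℝ) = ∑ j, (e t) j * y j := by
        simp only [PiLp.inner_apply, RCLike.inner_apply, conj_trivial]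
        exact Finset.sum_congr rfl fun j _ => mul_comm _ _
      rw [this]
    have hPQ' : P.map e.symm = Q.map e.symm := by
      apply measure_ext_of_charE
      intro t
      rw [hchar P t, hchar Q t, hφeq]
    calc P = (P.map e.symm).map e := (MeasurableEquiv.map_map_symm e).symm
    _ = (Q.map e.symm).map e := by rw [hPQ']
    _ = Q := MeasurableEquiv.map_map_symm e
  · rintro rfl
    simp
end

section
/- Analytical weighted inner product of Gaussian characteristic-function leaves: Let μ, μ', σ, σ' ∈ ℝ and η > 0, and let φ(t) = exp(i t μ − σ² t²/2) and φ'(t) = exp(i t μ' − σ'² t²/2) be the characteristic functions of the normal distributions N(μ, σ²) and N(μ', σ'²). With weighting function ω(t) = (1/(η √(2π))) exp(−t²/(2η²)), it holds that ∫_ℝ φ(t) · conj(φ'(t)) · ω(t) dt = (1/(η σ̂)) exp(−μ̂²/(2 σ̂²)), where μ̂ = μ − μ' and σ̂ = √(σ² + σ'² + 1/η²). -/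
open MeasureTheory Real

/-- Analytical weighted inner product of Gaussian characteristic-function leaves:
for Gaussian characteristic functions `φ(t) = exp(i t μ - σ² t²/2)` and
`φ'(t) = exp(i t μ' - σ'² t²/2)` and Gaussian weight
`ω(t) = (1/(η√(2π))) exp(-t²/(2η²))` with `η > 0`, one has
`∫ φ(t) conj(φ'(t)) ω(t) dt = (1/(η σ̂)) exp(-μ̂²/(2σ̂²))`
where `μ̂ = μ - μ'` and `σ̂ = √(σ² + σ'² + 1/η²)`. -/
theorem gaussian_leaf_inner_product (μ μ' σ σ' η : ℝ) (hη : 0 < η) :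
    (∫ t : ℝ,
        Complex.exp (((t * μ : ℝ) : ℂ) * Complex.I - ((σ ^ 2 * t ^ 2 / 2 : ℝ) : ℂ)) *
          (starRingEnd ℂ)
            (Complex.exp (((t * μ' : ℝ) : ℂ) * Complex.I - ((σ' ^ 2 * t ^ 2 / 2 : ℝ) : ℂ))) *
          (((1 / (η * Real.sqrt (2 * Real.pi))) * Real.exp (-t ^ 2 / (2 * η ^ 2)) : ℝ) : ℂ)) =
      (((1 / (η * Real.sqrt (σ ^ 2 + σ' ^ 2 + 1 / η ^ 2))) *
          Real.exp (-(μ - μ') ^ 2 / (2 * (σ ^ 2 + σ' ^ 2 + 1 / η ^ 2))) : ℝ) : ℂ) := by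
  set s : ℝ := σ ^ 2 + σ' ^ 2 + 1 / η ^ 2 with hs_def
  have hs : 0 < s := by positivity
  clear_value s
  have hηC : (η : ℂ) ≠ 0 := Complex.ofReal_ne_zero.mpr hη.ne'
  have hb : (((-s / 2 : ℝ) : ℂ)).re < 0 := by
    rw [Complex.ofReal_re]; linarith
  have key := integral_cexp_quadratic hb (((μ - μ' : ℝ) : ℂ) * Complex.I) 0
  have hinteg : (∫ t : ℝ,
        Complex.exp (((t * μ : ℝ) : ℂ) * Complex.I - ((σ ^ 2 * t ^ 2 / 2 : ℝ) : ℂ)) *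
          (starRingEnd ℂ)
            (Complex.exp (((t * μ' : ℝ) : ℂ) * Complex.I - ((σ' ^ 2 * t ^ 2 / 2 : ℝ) : ℂ))) *
          (((1 / (η * Real.sqrt (2 * Real.pi))) * Real.exp (-t ^ 2 / (2 * η ^ 2)) : ℝ) : ℂ))
      = (∫ t : ℝ, Complex.exp (((-s / 2 : ℝ) : ℂ) * t ^ 2 + (((μ - μ' : ℝ) : ℂ) * Complex.I) * t + 0))
        * ((1 / (η * Real.sqrt (2 * Real.pi)) : ℝ) : ℂ) := by
    rw [← integral_mul_const]
    congr 1
    ext t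
    rw [← Complex.exp_conj]
    simp only [map_sub, map_mul, Complex.conj_I, Complex.conj_ofReal]
    rw [Complex.ofReal_mul (1 / (η * Real.sqrt (2 * Real.pi))), Complex.ofReal_exp,
      ← Complex.exp_add, mul_left_comm, ← Complex.exp_add, mul_comm]
    congr 1
    rw [hs_def]
    push_cast
    field_simp
    ring
  rw [hinteg, key]
  have hc : ((((μ - μ' : ℝ) : ℂ) * Complex.I)) ^ 2 = -(((μ - μ')^2 : ℝ) : ℂ) := by
    rw [mul_pow, Complex.I_sq]; push_cast; ring
  rw [hc]
  have hsC : (s : ℂ) ≠ 0 := Complex.ofReal_ne_zero.mpr hs.ne'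
  have hexp : (0 : ℂ) - -(((μ - μ')^2 : ℝ) : ℂ) / (4 * ((-s / 2 : ℝ) : ℂ))
      = ((-(μ - μ')^2 / (2 * s) : ℝ) : ℂ) := by
    push_cast
    field_simp
    ring
  rw [hexp]
  have hpow : (↑Real.pi / -((-s / 2 : ℝ) : ℂ)) ^ (1 / 2 : ℂ)
      = ((Real.sqrt (2 * Real.pi / s) : ℝ) : ℂ) := by
    have h1 : (↑Real.pi / -((-s / 2 : ℝ) : ℂ)) = ((2 * Real.pi / s : ℝ) : ℂ) := by
      push_cast; field_simp
    rw [h1, Real.sqrt_eq_rpow, Complex.ofReal_cpow (by positivity)]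
    norm_num
  rw [hpow, ← Complex.ofReal_exp, ← Complex.ofReal_mul, ← Complex.ofReal_mul]
  congr 1
  have h1 : Real.sqrt (2 * Real.pi) ≠ 0 := by positivity
  have h2 : Real.sqrt s ≠ 0 := by positivity
  rw [Real.sqrt_div (by positivity : (0:ℝ) ≤ 2 * Real.pi)]
  field_simp
end
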